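/- Let G be a finite group, Γ = Pow(G), and let v ∈ G be a nontrivial p-power element (o(v) = p^i, i ≥ 1, p prime) that is not a CC-generator. Suppose every u ∈ N_Γ[v] with o(u) > o(v) that is a closed-twin of v in Γ_v = Γ[N_Γ[v]] satisfies deg_Γ(u) ≤ deg_Γ(v). Let y be a closed-twin of v in Γ_v of maximum order among all closed-twins of v in Γ_v, and let S = {x ∈ N_Γ[v] : o(y) divides o(x) and o(x) ≠ o(y)}. Then: (1) the set of closed-twins of v in Γ_v is exactly ⟨y⟩; and (2) N_Γ[v] is the disjoint union of ⟨y⟩ and S. -/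

import Mathlib

/-!
Closed twins of `v` in `Γ_v` are exactly the `z ∈ N[v]` with `N[v] ⊆ N[z]`. In particular
`N[v] ⊆ N[y]`, and if `o(y) > o(v)` the degree hypothesis upgrades this to `N[v] = N[y]`. Then the
element of each prime order `q ∣ o(y)` in `⟨y⟩` lies in `N[v]`, i.e. is comparable with the
`p`-element `v`, which forces `q = p`. So `⟨y⟩` is a cyclic `p`-group, whose cyclic subgroups form
a chain: every `z ∈ ⟨y⟩` has `N[y] ⊆ N[z]` and is a twin, and maximality of `o(y)` puts every twin
in `⟨y⟩`. An element `x ∈ N[v] ⊆ N[y]` outside `⟨y⟩` has `⟨y⟩ ⊊ ⟨x⟩`, hence lies in `S`.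
-/

/-- The power graph of a group `G`: distinct `x` and `y` are adjacent iff
`x ∈ ⟨y⟩` or `y ∈ ⟨x⟩`. -/
def powGraph (G : Type*) [Group G] : SimpleGraph G where
  Adj x y := x ≠ y ∧ (x ∈ Subgroup.zpowers y ∨ y ∈ Subgroup.zpowers x)
  symm := by
    constructor
    rintro x y ⟨hne, h⟩
    exact ⟨hne.symm, h.symm⟩
  loopless := by
    constructor
    rintro x ⟨hne, -⟩
    exact hne rfl

/-- The closed neighborhood of a vertex in a simple graph. -/
def closedNbhd {V : Type*} (X : SimpleGraph V) (v : V) : Set V :=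
  insert v (X.neighborSet v)

theorem self_mem_closedNbhd {V : Type*} (X : SimpleGraph V) (v : V) :
    v ∈ closedNbhd X v := Set.mem_insert v _

/-- `Γ_v`: the subgraph of the power graph induced on the closed neighborhood of `v`. -/
def powLocal (G : Type*) [Group G] (v : G) :
    SimpleGraph (closedNbhd (powGraph G) v) :=
  SimpleGraph.induce (closedNbhd (powGraph G) v) (powGraph G)

/-- `v` is a CC-generator: `⟨v⟩` is not properly contained in any cyclic subgroup,
i.e. `v ∈ ⟨g⟩` implies `⟨g⟩ = ⟨v⟩`. -/
def IsCCGenerator {G : Type*} [Group G] (v : G) : Prop :=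
  ∀ g : G, v ∈ Subgroup.zpowers g → Subgroup.zpowers g = Subgroup.zpowers v

section ClosedNbhd

variable {V : Type*} (X : SimpleGraph V)

theorem mem_closedNbhd_comm {u v : V} : u ∈ closedNbhd X v ↔ v ∈ closedNbhd X u := by
  simp only [closedNbhd, Set.mem_insert_iff, SimpleGraph.mem_neighborSet, X.adj_comm, eq_comm]

theorem closedNbhd_induce {s : Set V} (a : s) :
    closedNbhd (X.induce s) a = Subtype.val ⁻¹' closedNbhd X a := by
  ext b
  simp [closedNbhd, Subtype.ext_iff]

theorem closedNbhd_induce_closedNbhd_eq_iff {v z : V} (hz : z ∈ closedNbhd X v) :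
    closedNbhd (X.induce (closedNbhd X v)) ⟨z, hz⟩ =
        closedNbhd (X.induce (closedNbhd X v)) ⟨v, self_mem_closedNbhd X v⟩ ↔
      closedNbhd X v ⊆ closedNbhd X z := by
  rw [closedNbhd_induce, closedNbhd_induce, Subtype.coe_preimage_self, Set.eq_univ_iff_forall]
  exact Subtype.forall

theorem ncard_closedNbhd [Finite V] (v : V) :
    (closedNbhd X v).ncard = (X.neighborSet v).ncard + 1 :=
  Set.ncard_insert_of_notMem (X.irrefl ·) (Set.toFinite _)

theorem closedNbhd_eq_of_subset_of_ncard_neighborSet_le [Finite V] {u v : V}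
    (h : closedNbhd X v ⊆ closedNbhd X u)
    (hdeg : (X.neighborSet u).ncard ≤ (X.neighborSet v).ncard) :
    closedNbhd X v = closedNbhd X u :=
  Set.eq_of_subset_of_ncard_le h (by rw [ncard_closedNbhd, ncard_closedNbhd]; omega)
    (Set.toFinite _)

end ClosedNbhd

section PowerGraph

open Subgroup

variable {G : Type*} [Group G] [Finite G]

theorem mem_zpowers_pow_orderOf_div_of_pow_eq_one {g z : G} {d : ℕ} (hz : z ∈ zpowers g)
    (hd : d ∣ orderOf g) (hzd : z ^ d = 1) : z ∈ zpowers (g ^ (orderOf g / d)) := by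
  obtain ⟨k, rfl⟩ := mem_powers_iff_mem_zpowers.mpr hz
  beta_reduce at hzd ⊢
  have hd0 : 0 < d := Nat.pos_of_dvd_of_pos hd (orderOf_pos g)
  have hk : orderOf g / d * d ∣ k * d := by
    rw [Nat.div_mul_cancel hd, orderOf_dvd_iff_pow_eq_one, pow_mul, hzd]
  obtain ⟨m, rfl⟩ := Nat.dvd_of_mul_dvd_mul_right hd0 hk
  rw [pow_mul]
  exact pow_mem (mem_zpowers _) m

theorem mem_zpowers_of_orderOf_dvd {g u w : G} (hu : u ∈ zpowers g) (hw : w ∈ zpowers g)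
    (h : orderOf u ∣ orderOf w) : u ∈ zpowers w := by
  have hwg : orderOf w ∣ orderOf g := orderOf_dvd_of_mem_zpowers hw
  -- `⟨w⟩` is the subgroup of order `o(w)` of `⟨g⟩`, namely `⟨g ^ (o(g) / o(w))⟩`
  have hw_eq : zpowers w = zpowers (g ^ (orderOf g / orderOf w)) :=
    eq_of_le_of_card_ge
      (zpowers_le.mpr (mem_zpowers_pow_orderOf_div_of_pow_eq_one hw hwg (pow_orderOf_eq_one w)))
      (by rw [Nat.card_zpowers, Nat.card_zpowers,
        orderOf_pow_orderOf_div (orderOf_pos g).ne' hwg])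
  rw [hw_eq]
  exact mem_zpowers_pow_orderOf_div_of_pow_eq_one hu hwg (orderOf_dvd_iff_pow_eq_one.mp h)

theorem mem_zpowers_or_mem_zpowers_of_orderOf_eq_prime_pow {p a : ℕ} (hp : p.Prime) {g u w : G}
    (hg : orderOf g = p ^ a) (hu : u ∈ zpowers g) (hw : w ∈ zpowers g) :
    u ∈ zpowers w ∨ w ∈ zpowers u := by
  obtain ⟨b, -, hb⟩ := (Nat.dvd_prime_pow hp).mp (hg ▸ orderOf_dvd_of_mem_zpowers hu)
  obtain ⟨c, -, hc⟩ := (Nat.dvd_prime_pow hp).mp (hg ▸ orderOf_dvd_of_mem_zpowers hw)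
  rcases le_total b c with hbc | hcb
  · exact .inl (mem_zpowers_of_orderOf_dvd hu hw (hb ▸ hc ▸ pow_dvd_pow p hbc))
  · exact .inr (mem_zpowers_of_orderOf_dvd hw hu (hb ▸ hc ▸ pow_dvd_pow p hcb))

theorem mem_zpowers_of_mem_zpowers_of_orderOf_le {x y : G} (h : y ∈ zpowers x)
    (ho : orderOf x ≤ orderOf y) : x ∈ zpowers y := by
  rw [eq_of_le_of_card_ge (zpowers_le.mpr h) (by rwa [Nat.card_zpowers, Nat.card_zpowers])]
  exact mem_zpowers x

omit [Finite G] in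
theorem mem_closedNbhd_powGraph {u v : G} :
    u ∈ closedNbhd (powGraph G) v ↔ u ∈ zpowers v ∨ v ∈ zpowers u := by
  rcases eq_or_ne u v with rfl | huv
  · simp [self_mem_closedNbhd, mem_zpowers]
  · simp [closedNbhd, powGraph, huv, huv.symm, or_comm]

theorem closedNbhd_powGraph_subset_of_mem_zpowers {p a : ℕ} (hp : p.Prime) {y z : G}
    (hy : orderOf y = p ^ a) (hz : z ∈ zpowers y) :
    closedNbhd (powGraph G) y ⊆ closedNbhd (powGraph G) z := by
  intro x hx
  rw [mem_closedNbhd_powGraph] at hx ⊢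
  rcases hx with hxy | hyx
  · exact mem_zpowers_or_mem_zpowers_of_orderOf_eq_prime_pow hp hy hxy hz
  · exact .inr (zpowers_le.mpr hyx hz)

theorem exists_orderOf_eq_prime_pow_of_zpowers_subset_closedNbhd {p i : ℕ} (hp : p.Prime)
    (hi : 1 ≤ i) {v y : G} (hv : orderOf v = p ^ i)
    (h : (zpowers y : Set G) ⊆ closedNbhd (powGraph G) v) : ∃ a, orderOf y = p ^ a := by
  refine ⟨_, Nat.eq_prime_pow_of_unique_prime_dvd (orderOf_pos y).ne' fun {q} hq hqy => ?_⟩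
  have hx : orderOf (y ^ (orderOf y / q)) = q := orderOf_pow_orderOf_div (orderOf_pos y).ne' hqy
  rcases mem_closedNbhd_powGraph.mp (h (pow_mem (mem_zpowers y) _)) with hxv | hvx
  · have hqp : q ∣ p ^ i := hx ▸ hv ▸ orderOf_dvd_of_mem_zpowers hxv
    exact (Nat.prime_dvd_prime_iff_eq hq hp).mp (hq.dvd_of_dvd_pow hqp)
  · have hpq : p ^ i ∣ q := hx ▸ hv ▸ orderOf_dvd_of_mem_zpowers hvx
    exact ((Nat.prime_dvd_prime_iff_eq hp hq).mp ((dvd_pow_self p (by omega)).trans hpq)).symm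

theorem orderOf_dvd_and_ne_of_mem_closedNbhd_powGraph {x y : G}
    (hx : x ∈ closedNbhd (powGraph G) y) (hxy : x ∉ zpowers y) :
    orderOf y ∣ orderOf x ∧ orderOf x ≠ orderOf y := by
  have hyx : y ∈ zpowers x := (mem_closedNbhd_powGraph.mp hx).resolve_left hxy
  exact ⟨orderOf_dvd_of_mem_zpowers hyx,
    fun h => hxy (mem_zpowers_of_mem_zpowers_of_orderOf_le hyx h.le)⟩

theorem closedNbhd_powGraph_eq_zpowers_union {v y : G}
    (hsub : closedNbhd (powGraph G) v ⊆ closedNbhd (powGraph G) y)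
    (hy : (zpowers y : Set G) ⊆ closedNbhd (powGraph G) v) :
    closedNbhd (powGraph G) v = (zpowers y : Set G) ∪
      {x ∈ closedNbhd (powGraph G) v | orderOf y ∣ orderOf x ∧ orderOf x ≠ orderOf y} := by
  refine (Set.union_subset hy (Set.sep_subset _ _)).antisymm' fun x hx => ?_
  by_cases hxy : x ∈ zpowers y
  · exact .inl hxy
  · exact .inr ⟨hx, orderOf_dvd_and_ne_of_mem_closedNbhd_powGraph (hsub hx) hxy⟩

end PowerGraph

theorem twins_of_pPower_non_ccGenerator_general
    {G : Type*} [Group G] [Finite G] (v : G) (p i : ℕ)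
    (hp : p.Prime) (hi : 1 ≤ i) (hv : orderOf v = p ^ i)
    (hdeg : ∀ u : G, ∀ hu : u ∈ closedNbhd (powGraph G) v, orderOf v < orderOf u →
      closedNbhd (powLocal G v) ⟨u, hu⟩ =
        closedNbhd (powLocal G v) ⟨v, self_mem_closedNbhd _ v⟩ →
      ((powGraph G).neighborSet u).ncard ≤ ((powGraph G).neighborSet v).ncard)
    (y : G) (hy : y ∈ closedNbhd (powGraph G) v)
    (hytwin : closedNbhd (powLocal G v) ⟨y, hy⟩ =
      closedNbhd (powLocal G v) ⟨v, self_mem_closedNbhd _ v⟩)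
    (hymax : ∀ z : G, ∀ hz : z ∈ closedNbhd (powGraph G) v,
      closedNbhd (powLocal G v) ⟨z, hz⟩ =
        closedNbhd (powLocal G v) ⟨v, self_mem_closedNbhd _ v⟩ →
      orderOf z ≤ orderOf y) :
    {z : G | ∃ hz : z ∈ closedNbhd (powGraph G) v,
        closedNbhd (powLocal G v) ⟨z, hz⟩ =
          closedNbhd (powLocal G v) ⟨v, self_mem_closedNbhd _ v⟩} =
      (Subgroup.zpowers y : Set G) ∧
    closedNbhd (powGraph G) v =
      (Subgroup.zpowers y : Set G) ∪
        {x ∈ closedNbhd (powGraph G) v | orderOf y ∣ orderOf x ∧ orderOf x ≠ orderOf y} ∧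
    Disjoint (Subgroup.zpowers y : Set G)
      {x ∈ closedNbhd (powGraph G) v | orderOf y ∣ orderOf x ∧ orderOf x ≠ orderOf y} := by
  have htwin := fun z (hz : z ∈ closedNbhd (powGraph G) v) =>
    closedNbhd_induce_closedNbhd_eq_iff (powGraph G) hz
  have hsub := (htwin y hy).mp hytwin
  obtain ⟨a, hya⟩ : ∃ a, orderOf y = p ^ a := by
    rcases (hymax v (self_mem_closedNbhd _ v) rfl).eq_or_lt with heq | hlt
    · exact ⟨i, heq ▸ hv⟩
    · have hNy := closedNbhd_eq_of_subset_of_ncard_neighborSet_le _ hsub (hdeg y hy hlt hytwin)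
      exact exists_orderOf_eq_prime_pow_of_zpowers_subset_closedNbhd hp hi hv
        (hNy ▸ fun x hx => mem_closedNbhd_powGraph.mpr (.inl hx))
  have hzpowers : (Subgroup.zpowers y : Set G) ⊆ closedNbhd (powGraph G) v := fun z hz =>
    (mem_closedNbhd_comm _).mp
      (closedNbhd_powGraph_subset_of_mem_zpowers hp hya hz (hsub (self_mem_closedNbhd _ v)))
  refine ⟨?_, closedNbhd_powGraph_eq_zpowers_union hsub hzpowers,
    Set.disjoint_left.mpr fun x hx ⟨_, hdvd, hne⟩ =>
      hne (Nat.dvd_antisymm (orderOf_dvd_of_mem_zpowers hx) hdvd)⟩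
  ext z
  refine ⟨fun ⟨hz, hztwin⟩ => ?_, fun hz => ⟨hzpowers hz, (htwin z _).mpr
    (hsub.trans (closedNbhd_powGraph_subset_of_mem_zpowers hp hya hz))⟩⟩
  rcases mem_closedNbhd_powGraph.mp ((htwin z hz).mp hztwin hy) with hyz | hzy
  · exact mem_zpowers_of_mem_zpowers_of_orderOf_le hyz (hymax z hz hztwin)
  · exact hzy

/-- Lemma on nontrivial `p`-power elements that are not CC-generators: the closed-twins
of `v` in `Γ_v` are exactly the elements of `⟨y⟩`, and `N_Γ[v]` is the disjoint union of
`⟨y⟩` and `S = {x ∈ N_Γ[v] : o(y) ∣ o(x), o(x) ≠ o(y)}`, where `y` is a closed-twin of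
`v` in `Γ_v` of maximum order. -/
theorem twins_of_pPower_non_ccGenerator
    {G : Type*} [Group G] [Finite G] (v : G) (p i : ℕ)
    (hp : p.Prime) (hi : 1 ≤ i) (hv : orderOf v = p ^ i)
    (hncc : ¬ IsCCGenerator v)
    (hdeg : ∀ u : G, ∀ hu : u ∈ closedNbhd (powGraph G) v, orderOf v < orderOf u →
      closedNbhd (powLocal G v) ⟨u, hu⟩ =
        closedNbhd (powLocal G v) ⟨v, self_mem_closedNbhd _ v⟩ →
      ((powGraph G).neighborSet u).ncard ≤ ((powGraph G).neighborSet v).ncard)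
    (y : G) (hy : y ∈ closedNbhd (powGraph G) v)
    (hytwin : closedNbhd (powLocal G v) ⟨y, hy⟩ =
      closedNbhd (powLocal G v) ⟨v, self_mem_closedNbhd _ v⟩)
    (hymax : ∀ z : G, ∀ hz : z ∈ closedNbhd (powGraph G) v,
      closedNbhd (powLocal G v) ⟨z, hz⟩ =
        closedNbhd (powLocal G v) ⟨v, self_mem_closedNbhd _ v⟩ →
      orderOf z ≤ orderOf y) :
    {z : G | ∃ hz : z ∈ closedNbhd (powGraph G) v,
        closedNbhd (powLocal G v) ⟨z, hz⟩ =
          closedNbhd (powLocal G v) ⟨v, self_mem_closedNbhd _ v⟩} =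
      (Subgroup.zpowers y : Set G) ∧
    closedNbhd (powGraph G) v =
      (Subgroup.zpowers y : Set G) ∪
        {x ∈ closedNbhd (powGraph G) v | orderOf y ∣ orderOf x ∧ orderOf x ≠ orderOf y} ∧
    Disjoint (Subgroup.zpowers y : Set G)
      {x ∈ closedNbhd (powGraph G) v | orderOf y ∣ orderOf x ∧ orderOf x ≠ orderOf y} :=
  twins_of_pPower_non_ccGenerator_general v p i hp hi hv hdeg y hy hytwin hymax
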